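/- arXiv:2407.14858 — 11 statements merged into one kernel-verified Lean document; each statement's English description precedes it below -/
import Mathlib

section
/- Let Q be a finite type with a binary operation · whose left translations L_a(x) = a·x and right translations R_a(x) = x·a are bijections for every a ∈ Q, and let \ denote left division (x\z is the unique y with x·y = z). Then the operations A(x,y) = x·y and ^{(12)}A(x,y) = y·x are orthogonal if and only if for all x, y, z ∈ Q, (x\z)·x = (y\z)·y implies x = y. -/
/-! The pairs `(u, v)` with `v·u = z` are exactly the pairs `(v\z, v)`, and such a pair is sent to
`((v\z)·v, z)`. So the condition says precisely that `(x, y) ↦ (x·y, y·x)` is injective, which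
on a finite set is bijectivity. -/

open Function

theorem ld_mul_of_injective {Q : Type*} {mul : Q → Q → Q} {ld : Q → Q → Q}
    (hL : ∀ a, Injective (mul a)) (hld : ∀ x z, mul x (ld x z) = z) (x y : Q) :
    ld x (mul x y) = y :=
  hL x (hld x (mul x y))

theorem injective_mul_parastrophe_iff {Q : Type*} {mul : Q → Q → Q} {ld : Q → Q → Q}
    (hL : ∀ a, Injective (mul a)) (hld : ∀ x z, mul x (ld x z) = z) :
    Injective (fun p : Q × Q => (mul p.1 p.2, mul p.2 p.1)) ↔
      ∀ x y z, mul (ld x z) x = mul (ld y z) y → x = y := by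
  constructor
  · intro hinj x y z h
    have : (ld x z, x) = (ld y z, y) := hinj (by simp only [hld, h])
    exact (Prod.ext_iff.mp this).2
  · rintro hcond ⟨a, b⟩ ⟨c, d⟩ h
    obtain ⟨hab, hba⟩ : mul a b = mul c d ∧ mul b a = mul d c := Prod.mk.inj h
    have hbd : b = d := hcond b d (mul b a) <| by
      rw [ld_mul_of_injective hL hld, hab, hba, ld_mul_of_injective hL hld]
    subst hbd
    rw [hL b hba]

theorem orth_parastrophe_12_general {Q : Type*} [Finite Q] (mul : Q → Q → Q)
    (hL : ∀ a : Q, Function.Bijective (fun x => mul a x))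
    (ld : Q → Q → Q)
    (hld : ∀ x z : Q, mul x (ld x z) = z) :
    Function.Bijective (fun p : Q × Q => (mul p.1 p.2, mul p.2 p.1)) ↔
      ∀ x y z : Q, mul (ld x z) x = mul (ld y z) y → x = y := by
  rw [← Finite.injective_iff_bijective]
  exact injective_mul_parastrophe_iff (fun a => (hL a).injective) hld

/-- For a finite quasigroup `(Q, ·)` with left division `\`,
the operation `A(x,y) = x·y` and its (12)-parastrophe `A^{(12)}(x,y) = y·x`
are orthogonal iff `(x\z)·x = (y\z)·y → x = y` for all `x y z`. -/
theorem orth_parastrophe_12 {Q : Type*} [Finite Q] (mul : Q → Q → Q)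
    (hL : ∀ a : Q, Function.Bijective (fun x => mul a x))
    (hR : ∀ a : Q, Function.Bijective (fun x => mul x a))
    (ld : Q → Q → Q)
    (hld : ∀ x z : Q, mul x (ld x z) = z) :
    Function.Bijective (fun p : Q × Q => (mul p.1 p.2, mul p.2 p.1)) ↔
      ∀ x y z : Q, mul (ld x z) x = mul (ld y z) y → x = y :=
  orth_parastrophe_12_general mul hL ld hld
end

section
/- Let Q be a finite type with a binary operation · whose left translations L_a(x) = a·x and right translations R_a(x) = x·a are bijections for every a ∈ Q, and let / denote right division (z/y is the unique x with x·y = z). Then the operations A(x,y) = x·y and ^{(13)}A(x,y) = x/y are orthogonal if and only if for all x, y, z ∈ Q, (z·x)·x = (z·y)·y implies x = y. -/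
/-!
Precompose `(x, y) ↦ (x·y, x/y)` with the bijection `(u, y) ↦ (u·y, y)`, whose inverse is
`(z, y) ↦ (z/y, y)`. Since `(u·y)/y = u`, the composite is `(u, y) ↦ ((u·y)·y, u)`, which is
injective, hence (for finite `Q`) bijective, exactly when every map `y ↦ (u·y)·y` is injective.
-/

open Function

section

variable {Q : Type*} (mul rd : Q → Q → Q)

def mulShearEquiv (hR : ∀ a : Q, Injective (fun x => mul x a))
    (hrd : ∀ z y : Q, mul (rd z y) y = z) : Q × Q ≃ Q × Q where
  toFun p := (mul p.1 p.2, p.2)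
  invFun p := (rd p.1 p.2, p.2)
  left_inv p := Prod.ext (hR p.2 (hrd _ _)) rfl
  right_inv _ := Prod.ext (hrd _ _) rfl

theorem comp_mulShearEquiv (hR : ∀ a : Q, Injective (fun x => mul x a))
    (hrd : ∀ z y : Q, mul (rd z y) y = z) :
    (fun p : Q × Q => (mul p.1 p.2, rd p.1 p.2)) ∘ mulShearEquiv mul rd hR hrd =
      fun p => (mul (mul p.1 p.2) p.2, p.1) :=
  funext fun p => Prod.ext rfl (hR p.2 (hrd _ _))

end

theorem injective_prodMk_fst_iff {α β γ : Type*} (g : α → β → γ) :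
    Injective (fun p : α × β => (g p.1 p.2, p.1)) ↔ ∀ a, Injective (g a) := by
  constructor
  · intro hg a b b' h
    exact congrArg Prod.snd (@hg (a, b) (a, b') (Prod.ext h rfl))
  · rintro hg ⟨a, b⟩ ⟨a', b'⟩ h
    obtain ⟨hgab, rfl⟩ := Prod.ext_iff.mp h
    exact Prod.ext rfl (hg a hgab)

theorem orth_parastrophe_13_general {Q : Type*} [Finite Q] (mul : Q → Q → Q)
    (hR : ∀ a : Q, Function.Bijective (fun x => mul x a))
    (rd : Q → Q → Q)
    (hrd : ∀ z y : Q, mul (rd z y) y = z) :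
    Function.Bijective (fun p : Q × Q => (mul p.1 p.2, rd p.1 p.2)) ↔
      ∀ x y z : Q, mul (mul z x) x = mul (mul z y) y → x = y := by
  rw [← (mulShearEquiv mul rd (fun a => (hR a).injective) hrd).bijective_comp,
    comp_mulShearEquiv, ← Finite.injective_iff_bijective,
    injective_prodMk_fst_iff fun u y => mul (mul u y) y]
  exact ⟨fun h x y z => @h z x y, fun h z x y => h x y z⟩

/-- For a finite quasigroup `(Q, ·)` with right division `/`,
the operation `A(x,y) = x·y` and its (13)-parastrophe `A^{(13)}(x,y) = x/y`
are orthogonal iff `(z·x)·x = (z·y)·y → x = y` for all `x y z`. -/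
theorem orth_parastrophe_13 {Q : Type*} [Finite Q] (mul : Q → Q → Q)
    (hL : ∀ a : Q, Function.Bijective (fun x => mul a x))
    (hR : ∀ a : Q, Function.Bijective (fun x => mul x a))
    (rd : Q → Q → Q)
    (hrd : ∀ z y : Q, mul (rd z y) y = z) :
    Function.Bijective (fun p : Q × Q => (mul p.1 p.2, rd p.1 p.2)) ↔
      ∀ x y z : Q, mul (mul z x) x = mul (mul z y) y → x = y :=
  orth_parastrophe_13_general mul hR rd hrd
end

section
/- Let Q be a finite type with a binary operation · whose left translations L_a(x) = a·x and right translations R_a(x) = x·a are bijections for every a ∈ Q, and let \ denote left division (x\z is the unique y with x·y = z). Then the operations A(x,y) = x·y and ^{(23)}A(x,y) = x\y are orthogonal if and only if for all x, y, z ∈ Q, x·(x·z) = y·(y·z) implies x = y. -/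
/-! Substituting `y = x·z` turns the pair `(x·y, x\y)` into `(x·(x·z), z)`, so the map
`(x, y) ↦ (x·y, x\y)` is injective exactly when each `x ↦ x·(x·z)` is; on a finite set
injectivity is bijectivity. -/

theorem injective_mul_ldiv_iff {Q : Type*} (mul ld : Q → Q → Q)
    (mul_ld : ∀ x z : Q, mul x (ld x z) = z) (ld_mul : ∀ x y : Q, ld x (mul x y) = y) :
    Function.Injective (fun p : Q × Q => (mul p.1 p.2, ld p.1 p.2)) ↔
      ∀ x y z : Q, mul x (mul x z) = mul y (mul y z) → x = y := by
  constructor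
  · intro hinj x y z h
    have hpair : (x, mul x z) = (y, mul y z) := hinj (by simp only [ld_mul, h])
    exact congrArg Prod.fst hpair
  · rintro h ⟨x, y⟩ ⟨x', y'⟩ he
    obtain ⟨hmul, hld⟩ := Prod.mk.inj he
    have hx : x = x' := h x x' (ld x y) (by rw [mul_ld, hmul, hld, mul_ld])
    subst hx
    exact Prod.ext rfl (by rw [← mul_ld x y, hld, mul_ld])

theorem orth_parastrophe_23_general {Q : Type*} [Finite Q] (mul : Q → Q → Q)
    (hL : ∀ a : Q, Function.Bijective (fun x => mul a x))
    (ld : Q → Q → Q)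
    (hld : ∀ x z : Q, mul x (ld x z) = z) :
    Function.Bijective (fun p : Q × Q => (mul p.1 p.2, ld p.1 p.2)) ↔
      ∀ x y z : Q, mul x (mul x z) = mul y (mul y z) → x = y := by
  have ld_mul : ∀ x y : Q, ld x (mul x y) = y := fun x y => (hL x).injective (hld x (mul x y))
  rw [← Finite.injective_iff_bijective]
  exact injective_mul_ldiv_iff mul ld hld ld_mul

/-- For a finite quasigroup `(Q, ·)` with left division `\`,
the operation `A(x,y) = x·y` and its (23)-parastrophe `A^{(23)}(x,y) = x\y`
are orthogonal iff `x·(x·z) = y·(y·z) → x = y` for all `x y z`. -/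
theorem orth_parastrophe_23 {Q : Type*} [Finite Q] (mul : Q → Q → Q)
    (hL : ∀ a : Q, Function.Bijective (fun x => mul a x))
    (hR : ∀ a : Q, Function.Bijective (fun x => mul x a))
    (ld : Q → Q → Q)
    (hld : ∀ x z : Q, mul x (ld x z) = z) :
    Function.Bijective (fun p : Q × Q => (mul p.1 p.2, ld p.1 p.2)) ↔
      ∀ x y z : Q, mul x (mul x z) = mul y (mul y z) → x = y :=
  orth_parastrophe_23_general mul hL ld hld
end

section
/- Let Q be a finite type with a binary operation · whose left translations L_a(x) = a·x and right translations R_a(x) = x·a are bijections for every a ∈ Q, and let / denote right division (z/y is the unique x with x·y = z). Then the operations A(x,y) = x·y and ^{(123)}A(x,y) = y/x are orthogonal if and only if for all x, y, z ∈ Q, x·(z·x) = y·(z·y) implies x = y. -/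
/-!
Substituting `y = z·x` turns the map `(x, y) ↦ (x·y, y/x)` into `(x, z) ↦ (x·(z·x), z)`,
and this substitution is a bijection of `Q × Q` because `y ↦ y/x` inverts `z ↦ z·x`.
The second map keeps `z` and is injective exactly when every `x ↦ x·(z·x)` is, which is the
stated condition; on a finite set injective and bijective self-maps coincide.
-/

open Function

theorem injective_prodMap_snd_iff {α β : Type*} (f : β → α → α) :
    Injective (fun p : α × β => (f p.2 p.1, p.2)) ↔ ∀ b, Injective (f b) := by
  constructor
  · intro hf b x y hxy
    simpa using @hf (x, b) (y, b) (by simp [hxy])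
  · rintro hf ⟨x, b⟩ ⟨y, c⟩ hxy
    simp only [Prod.mk.injEq] at hxy
    obtain ⟨hfxy, rfl⟩ := hxy
    rw [hf b hfxy]

section RightDivision

variable {Q : Type*} (mul rd : Q → Q → Q)
  (hR : ∀ a : Q, Injective (fun x => mul x a)) (hrd : ∀ z y : Q, mul (rd z y) y = z)

include hR hrd in
theorem rd_mul_cancel (w x : Q) : rd (mul w x) x = w :=
  hR x (hrd (mul w x) x)

def mulRightSubst : Q × Q ≃ Q × Q where
  toFun p := (p.1, mul p.2 p.1)
  invFun p := (p.1, rd p.2 p.1)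
  left_inv p := by simp [rd_mul_cancel mul rd hR hrd]
  right_inv p := by simp [hrd]

include hR hrd in
theorem injective_mul_rd_iff :
    Injective (fun p : Q × Q => (mul p.1 p.2, rd p.2 p.1)) ↔
      ∀ x y z : Q, mul x (mul z x) = mul y (mul z y) → x = y := by
  rw [← (mulRightSubst mul rd hR hrd).injective_comp]
  have hcomp : (fun p : Q × Q => (mul p.1 p.2, rd p.2 p.1)) ∘ mulRightSubst mul rd hR hrd =
      fun p => (mul p.1 (mul p.2 p.1), p.2) := by
    ext p <;> simp [mulRightSubst, rd_mul_cancel mul rd hR hrd]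
  rw [hcomp, injective_prodMap_snd_iff (fun z x => mul x (mul z x))]
  exact ⟨fun h x y z => @h z x y, fun h z x y => h x y z⟩

end RightDivision

theorem orth_parastrophe_123_general {Q : Type*} [Finite Q] (mul : Q → Q → Q)
    (hR : ∀ a : Q, Function.Bijective (fun x => mul x a))
    (rd : Q → Q → Q)
    (hrd : ∀ z y : Q, mul (rd z y) y = z) :
    Function.Bijective (fun p : Q × Q => (mul p.1 p.2, rd p.2 p.1)) ↔
      ∀ x y z : Q, mul x (mul z x) = mul y (mul z y) → x = y := by
  rw [← Finite.injective_iff_bijective]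
  exact injective_mul_rd_iff mul rd (fun a => (hR a).1) hrd

/-- For a finite quasigroup `(Q, ·)` with right division `/`,
the operation `A(x,y) = x·y` and its (123)-parastrophe `A^{(123)}(x,y) = y/x`
are orthogonal iff `x·(z·x) = y·(z·y) → x = y` for all `x y z`. -/
theorem orth_parastrophe_123 {Q : Type*} [Finite Q] (mul : Q → Q → Q)
    (hL : ∀ a : Q, Function.Bijective (fun x => mul a x))
    (hR : ∀ a : Q, Function.Bijective (fun x => mul x a))
    (rd : Q → Q → Q)
    (hrd : ∀ z y : Q, mul (rd z y) y = z) :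
    Function.Bijective (fun p : Q × Q => (mul p.1 p.2, rd p.2 p.1)) ↔
      ∀ x y z : Q, mul x (mul z x) = mul y (mul z y) → x = y :=
  orth_parastrophe_123_general mul hR rd hrd
end

section
/- Let (Q,+) be an abelian group, let φ and ψ be automorphisms of (Q,+), let c ∈ Q, and let A(x,y) = φ(x) + ψ(y) + c. Then A and its (12)-parastrophe ^{(12)}A(x,y) = ψ(x) + φ(y) + c are orthogonal if and only if both maps x ↦ φ(x) − ψ(x) and x ↦ φ(x) + ψ(x) are bijections of Q. -/
/-!
Write `σ = φ + ψ`, `δ = φ - ψ` and `L(x, y) = (φ x + ψ y, ψ x + φ y)`, the pair `(A, ⁽¹²⁾A)` for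
`c = 0`. Then `L₁ + L₂ = σ (x + y)`, `L₁ - L₂ = δ (x - y)`, `L (t, t) = (σ t, σ t)` and
`L (x, -x) = (δ x, -δ x)`. The last two transfer injectivity of `L` to `σ` and `δ`, the first two
transfer surjectivity. Conversely a zero of `L` has `x + y = 0` by injectivity of `σ`, hence is
`(x, -x)` with `δ x = 0`; and `L (x, t - x) = (u, v)` as soon as `σ t = u + v` and
`δ x = u - ψ t`. The constant `c` is a translation and does not affect bijectivity.
-/

namespace AddMonoidHom

variable {Q R : Type*} [AddCommGroup Q] [AddCommGroup R] (φ ψ : Q →+ R)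

def withParastrophe : Q × Q →+ R × R := (φ.coprod ψ).prod (ψ.coprod φ)

@[simp]
theorem withParastrophe_apply (p : Q × Q) :
    φ.withParastrophe ψ p = (φ p.1 + ψ p.2, ψ p.1 + φ p.2) := rfl

theorem withParastrophe_fst_add_snd (p : Q × Q) :
    (φ.withParastrophe ψ p).1 + (φ.withParastrophe ψ p).2 = (φ + ψ) (p.1 + p.2) := by
  simp only [withParastrophe_apply, add_apply, map_add]
  abel

theorem withParastrophe_fst_sub_snd (p : Q × Q) :
    (φ.withParastrophe ψ p).1 - (φ.withParastrophe ψ p).2 = (φ - ψ) (p.1 - p.2) := by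
  simp only [withParastrophe_apply, sub_apply, map_sub]
  abel

theorem withParastrophe_diag (t : Q) :
    φ.withParastrophe ψ (t, t) = ((φ + ψ) t, (φ + ψ) t) := by
  simp [add_comm]

theorem withParastrophe_antidiag (x : Q) :
    φ.withParastrophe ψ (x, -x) = ((φ - ψ) x, -(φ - ψ) x) := by
  simp only [withParastrophe_apply, sub_apply, map_neg, Prod.mk.injEq]
  constructor <;> abel

variable {φ ψ}

theorem injective_add_of_injective_withParastrophe
    (h : Function.Injective (φ.withParastrophe ψ)) : Function.Injective (φ + ψ) := by
  intro t t' htt'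
  have := h (a₁ := (t, t)) (a₂ := (t', t'))
    (by rw [withParastrophe_diag, withParastrophe_diag, htt'])
  exact (Prod.mk.inj this).1

theorem injective_sub_of_injective_withParastrophe
    (h : Function.Injective (φ.withParastrophe ψ)) : Function.Injective (φ - ψ) := by
  intro x x' hxx'
  have := h (a₁ := (x, -x)) (a₂ := (x', -x'))
    (by rw [withParastrophe_antidiag, withParastrophe_antidiag, hxx'])
  exact (Prod.mk.inj this).1

theorem surjective_add_of_surjective_withParastrophe
    (h : Function.Surjective (φ.withParastrophe ψ)) : Function.Surjective (φ + ψ) := by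
  intro u
  obtain ⟨p, hp⟩ := h (u, 0)
  refine ⟨p.1 + p.2, ?_⟩
  rw [← withParastrophe_fst_add_snd, hp, add_zero]

theorem surjective_sub_of_surjective_withParastrophe
    (h : Function.Surjective (φ.withParastrophe ψ)) : Function.Surjective (φ - ψ) := by
  intro u
  obtain ⟨p, hp⟩ := h (u, 0)
  refine ⟨p.1 - p.2, ?_⟩
  rw [← withParastrophe_fst_sub_snd, hp, sub_zero]

theorem injective_withParastrophe (hadd : Function.Injective (φ + ψ))
    (hsub : Function.Injective (φ - ψ)) : Function.Injective (φ.withParastrophe ψ) := by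
  refine (injective_iff_map_eq_zero _).2 fun ⟨x, y⟩ hxy => ?_
  have hy : y = -x := by
    have := withParastrophe_fst_add_snd φ ψ (x, y)
    rw [hxy, Prod.fst_zero, Prod.snd_zero, add_zero, eq_comm, ← map_zero (φ + ψ)] at this
    exact eq_neg_of_add_eq_zero_right (hadd this)
  subst hy
  have hx : (φ - ψ) x = 0 := by
    have := congrArg Prod.fst hxy
    rwa [withParastrophe_antidiag] at this
  rw [(injective_iff_map_eq_zero _).1 hsub x hx, neg_zero, Prod.mk_zero_zero]

theorem surjective_withParastrophe (hadd : Function.Surjective (φ + ψ))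
    (hsub : Function.Surjective (φ - ψ)) : Function.Surjective (φ.withParastrophe ψ) := by
  rintro ⟨u, v⟩
  obtain ⟨t, ht⟩ := hadd (u + v)
  obtain ⟨x, hx⟩ := hsub (u - ψ t)
  rw [add_apply] at ht
  rw [sub_apply] at hx
  refine ⟨(x, t - x), ?_⟩
  simp only [withParastrophe_apply, map_sub, Prod.mk.injEq]
  constructor
  · calc φ x + (ψ t - ψ x) = (φ x - ψ x) + ψ t := by abel
      _ = u := by rw [hx, sub_add_cancel]
  · calc ψ x + (φ t - φ x) = (φ t + ψ t) - ψ t - (φ x - ψ x) := by abel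
      _ = v := by rw [ht, hx]; abel

theorem bijective_withParastrophe_iff :
    Function.Bijective (φ.withParastrophe ψ) ↔
      Function.Bijective (φ - ψ) ∧ Function.Bijective (φ + ψ) :=
  ⟨fun h => ⟨⟨injective_sub_of_injective_withParastrophe h.1,
      surjective_sub_of_surjective_withParastrophe h.2⟩,
    ⟨injective_add_of_injective_withParastrophe h.1,
      surjective_add_of_surjective_withParastrophe h.2⟩⟩,
   fun ⟨hsub, hadd⟩ => ⟨injective_withParastrophe hadd.1 hsub.1,
    surjective_withParastrophe hadd.2 hsub.2⟩⟩

end AddMonoidHom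

/-- A T-quasigroup `A(x,y) = φ x + ψ y + c` over an abelian group is
orthogonal to its (12)-parastrophe `ψ x + φ y + c` iff both `φ - ψ` and `φ + ψ`
are bijections. -/
theorem Tquasigroup_orth_12 {Q : Type*} [AddCommGroup Q]
    (φ ψ : Q ≃+ Q) (c : Q) :
    Function.Bijective
        (fun p : Q × Q => (φ p.1 + ψ p.2 + c, ψ p.1 + φ p.2 + c)) ↔
      Function.Bijective (fun x : Q => φ x - ψ x) ∧
        Function.Bijective (fun x : Q => φ x + ψ x) := by
  have hshift : (fun p : Q × Q => (φ p.1 + ψ p.2 + c, ψ p.1 + φ p.2 + c)) =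
      Equiv.addRight (c, c) ∘ (φ.toAddMonoidHom.withParastrophe ψ.toAddMonoidHom) := rfl
  rw [hshift, Equiv.comp_bijective]
  exact AddMonoidHom.bijective_withParastrophe_iff
end

section
/- Let (Q,+) be an abelian group, let φ and ψ be automorphisms of (Q,+), let c ∈ Q, and let A(x,y) = φ(x) + ψ(y) + c. Then A and its (13)-parastrophe ^{(13)}A(x,y) = φ⁻¹(x) − φ⁻¹(ψ(y)) − φ⁻¹(c) are orthogonal if and only if the map x ↦ x + φ(x) is a bijection of Q. -/
/-!
Adding `φ` of the second coordinate of `(A(x,y), ¹³A(x,y))` to the first gives `x + φ x`, while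
for fixed `x` the second coordinate `¹³A(x,y)` is a bijection in `y`. So up to a shear of `Q × Q`
the pair of operations is the map `(x, y) ↦ (x + φ x, ¹³A(x,y))`, which is bijective exactly when
its first coordinate is.
-/

open Function

theorem bijective_prod_mk_of_equiv_iff {α β γ δ : Type*} [Nonempty α] [Nonempty δ]
    (g : α → γ) (h : α → β ≃ δ) :
    Bijective (fun p : α × β => (g p.1, h p.1 p.2)) ↔ Bijective g := by
  have hcomp : (fun p : α × β => (g p.1, h p.1 p.2)) =
      Prod.map g id ∘ Equiv.prodShear (Equiv.refl α) h := rfl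
  rw [hcomp, Equiv.bijective_comp, Prod.map_bijective]
  simp [bijective_id]

def Equiv.addShear {α β : Type*} [AddGroup α] (f : β → α) : α × β ≃ α × β where
  toFun p := (p.1 + f p.2, p.2)
  invFun p := (p.1 - f p.2, p.2)
  left_inv _ := by simp
  right_inv _ := by simp

/-- A T-quasigroup `A(x,y) = φ x + ψ y + c` over an abelian group is
orthogonal to its (13)-parastrophe `φ⁻¹ x - φ⁻¹ (ψ y) - φ⁻¹ c` iff
`x ↦ x + φ x` is a bijection. -/
theorem Tquasigroup_orth_13 {Q : Type*} [AddCommGroup Q]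
    (φ ψ : Q ≃+ Q) (c : Q) :
    Function.Bijective
        (fun p : Q × Q =>
          (φ p.1 + ψ p.2 + c, φ.symm p.1 - φ.symm (ψ p.2) - φ.symm c)) ↔
      Function.Bijective (fun x : Q => x + φ x) := by
  let parastrophe (x : Q) : Q ≃ Q :=
    (ψ.toEquiv.trans φ.symm.toEquiv).trans
      ((Equiv.subLeft (φ.symm x)).trans (Equiv.subRight (φ.symm c)))
  have hshear : Equiv.addShear φ ∘
      (fun p : Q × Q => (φ p.1 + ψ p.2 + c, φ.symm p.1 - φ.symm (ψ p.2) - φ.symm c)) =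
      fun p => (p.1 + φ p.1, parastrophe p.1 p.2) := by
    funext p
    ext
    · simp only [Equiv.addShear, Equiv.coe_fn_mk, comp_apply, map_sub, AddEquiv.apply_symm_apply,
        add_add_sub_cancel]
      abel
    · rfl
  rw [← Equiv.comp_bijective _ (Equiv.addShear φ), hshear]
  exact bijective_prod_mk_of_equiv_iff (fun x => x + φ x) parastrophe
end

section
/- Let (Q,+) be an abelian group, let φ and ψ be automorphisms of (Q,+), let c ∈ Q, and let A(x,y) = φ(x) + ψ(y) + c. Then A and its (23)-parastrophe ^{(23)}A(x,y) = −ψ⁻¹(φ(x)) + ψ⁻¹(y) − ψ⁻¹(c) are orthogonal if and only if the map x ↦ x + ψ(x) is a bijection of Q. -/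
/-!
In the coordinates `u = φ x`, `s = ψ⁻¹ (y - φ x - c)` the pair `(A, ²³A)` becomes
`(u, s) ↦ (u + ψ u + ψ (ψ s + c) + c, s)`: a shear applied after `u ↦ u + ψ u` in the first
coordinate, hence bijective exactly when `u ↦ u + ψ u` is.
-/

open Function

theorem bijective_add_fst_iff {α β : Type*} [AddGroup α] [Nonempty β] (f : α → α) (k : β → α) :
    Bijective (fun p : α × β => (f p.1 + k p.2, p.2)) ↔ Bijective f := by
  let shear : α × β ≃ α × β :=
    { toFun := fun p => (p.1 + k p.2, p.2)
      invFun := fun p => (p.1 - k p.2, p.2)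
      left_inv := fun p => by simp
      right_inv := fun p => by simp }
  have hcomp : (fun p : α × β => (f p.1 + k p.2, p.2)) = shear ∘ Prod.map f id := rfl
  rw [hcomp, Equiv.comp_bijective, Prod.map_bijective]
  simp [bijective_id]

/-- A T-quasigroup `A(x,y) = φ x + ψ y + c` over an abelian group is
orthogonal to its (23)-parastrophe `-ψ⁻¹ (φ x) + ψ⁻¹ y - ψ⁻¹ c` iff
`x ↦ x + ψ x` is a bijection. -/
theorem Tquasigroup_orth_23 {Q : Type*} [AddCommGroup Q]
    (φ ψ : Q ≃+ Q) (c : Q) :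
    Function.Bijective
        (fun p : Q × Q =>
          (φ p.1 + ψ p.2 + c, -ψ.symm (φ p.1) + ψ.symm p.2 - ψ.symm c)) ↔
      Function.Bijective (fun x : Q => x + ψ x) := by
  let coords : Q × Q ≃ Q × Q :=
    Equiv.prodShear φ.toEquiv fun x => (Equiv.subRight (φ x + c)).trans ψ.symm.toEquiv
  have hcomp : (fun p : Q × Q =>
        (φ p.1 + ψ p.2 + c, -ψ.symm (φ p.1) + ψ.symm p.2 - ψ.symm c)) =
      (fun p : Q × Q => (p.1 + ψ p.1 + (ψ (ψ p.2 + c) + c), p.2)) ∘ coords := by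
    funext p
    simp only [coords, comp_apply, Equiv.prodShear_apply, Equiv.trans_apply,
      Equiv.subRight_apply, AddEquiv.toEquiv_eq_coe, AddEquiv.coe_toEquiv,
      AddEquiv.apply_symm_apply, map_add, map_sub, Prod.mk.injEq]
    constructor <;> abel
  rw [hcomp, Equiv.bijective_comp]
  exact bijective_add_fst_iff (fun x => x + ψ x) fun s => ψ (ψ s + c) + c
end

section
/- Let (Q,+) be an abelian group, let φ and ψ be automorphisms of (Q,+), let c ∈ Q, and let A(x,y) = φ(x) + ψ(y) + c. Then A and its (123)-parastrophe ^{(123)}A(x,y) = −φ⁻¹(ψ(x)) + φ⁻¹(y) − φ⁻¹(c) are orthogonal if and only if the map x ↦ φ(x) + ψ(ψ(x)) is a bijection of Q. -/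
/-!
Solving the second coordinate `v = φ⁻¹ (y - ψ x - c)` for `y = φ v + ψ x + c` is a change of
variables `(x, v) ↦ (x, y)` of `Q × Q`. In the coordinates `(x, v)` the pair of operations becomes
`(x, v) ↦ (φ x + ψ (ψ x) + ψ (φ v) + ψ c + c, v)`, which is bijective exactly when
`x ↦ φ x + ψ (ψ x)` is.
-/

open Function

theorem Function.bijective_fixing_snd_iff {α β γ : Type*} (f : α → β → γ) :
    Bijective (fun p : α × β => (f p.1 p.2, p.2)) ↔ ∀ b, Bijective (f · b) := by
  refine ⟨fun ⟨hinj, hsurj⟩ b => ⟨fun a a' h => ?_, fun z => ?_⟩, fun h => ⟨?_, ?_⟩⟩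
  · simpa using @hinj (a, b) (a', b) (Prod.ext h rfl)
  · obtain ⟨⟨a, b'⟩, hab⟩ := hsurj (z, b)
    obtain ⟨hz, rfl⟩ := Prod.ext_iff.mp hab
    exact ⟨a, hz⟩
  · rintro ⟨a, b⟩ ⟨a', b'⟩ hab
    simp only [Prod.mk.injEq] at hab
    obtain ⟨hf, rfl⟩ := hab
    rw [(h b).injective hf]
  · rintro ⟨z, b⟩
    obtain ⟨a, ha⟩ := (h b).surjective z
    exact ⟨(a, b), Prod.ext ha rfl⟩

theorem Function.bijective_add_fixing_snd_iff {γ α β : Type*} [AddGroup α] [Nonempty β]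
    (g : γ → α) (h : β → α) :
    Bijective (fun p : γ × β => (g p.1 + h p.2, p.2)) ↔ Bijective g := by
  refine (bijective_fixing_snd_iff fun a b => g a + h b).trans ⟨fun hg => ?_, fun hg b => ?_⟩
  · exact (Equiv.addRight _).comp_bijective g |>.mp (hg (Classical.arbitrary β))
  · exact (Equiv.addRight (h b)).comp_bijective g |>.mpr hg

/-- A T-quasigroup `A(x,y) = φ x + ψ y + c` over an abelian group is
orthogonal to its (123)-parastrophe `-φ⁻¹ (ψ x) + φ⁻¹ y - φ⁻¹ c` iff
`x ↦ φ x + ψ (ψ x)` is a bijection. -/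
theorem Tquasigroup_orth_123 {Q : Type*} [AddCommGroup Q]
    (φ ψ : Q ≃+ Q) (c : Q) :
    Function.Bijective
        (fun p : Q × Q =>
          (φ p.1 + ψ p.2 + c, -φ.symm (ψ p.1) + φ.symm p.2 - φ.symm c)) ↔
      Function.Bijective (fun x : Q => φ x + ψ (ψ x)) := by
  let solveY : Q × Q ≃ Q × Q :=
    Equiv.prodShear (Equiv.refl Q) fun x => φ.toEquiv.trans (Equiv.addRight (ψ x + c))
  refine (solveY.bijective_comp _).symm.trans ?_
  convert bijective_add_fixing_snd_iff (fun x : Q => φ x + ψ (ψ x)) fun v => ψ (φ v) + ψ c + c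
    using 2
  funext ⟨x, v⟩
  simp only [solveY, comp_apply, Equiv.prodShear_apply, Equiv.refl_apply, Equiv.trans_apply,
    AddEquiv.toEquiv_eq_coe, AddEquiv.coe_toEquiv, Equiv.coe_addRight, map_add,
    AddEquiv.symm_apply_apply, Prod.mk.injEq]
  constructor <;> abel
end

section
/- Let (Q,+) be an abelian group, let φ and ψ be automorphisms of (Q,+), let c ∈ Q, and let A(x,y) = φ(x) + ψ(y) + c. Then A and its (132)-parastrophe ^{(132)}A(x,y) = ψ⁻¹(x) − ψ⁻¹(φ(y)) − ψ⁻¹(c) are orthogonal if and only if the map x ↦ φ(φ(x)) + ψ(x) is a bijection of Q. -/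
/-!
Solving the second coordinate of the map for `x` (as `x = ψ u + φ y + c`) is an invertible change
of variables `(x, y) ↦ (y, u)`; in the new variables the map becomes the shear
`(y, u) ↦ (φ (φ y) + ψ y + φ (ψ u) + φ c + c, u)`, which is bijective exactly when
`y ↦ φ (φ y) + ψ y` is.
-/

theorem Function.bijective_prod_shear_iff {α β G : Type*} [AddGroup G] [Nonempty α]
    [Nonempty β] (f : α → G) (h : β → G) :
    Function.Bijective (fun p : α × β => (f p.1 + h p.2, p.2)) ↔ Function.Bijective f := by
  let shear : G × β ≃ G × β :=
    { toFun := fun q => (q.1 + h q.2, q.2)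
      invFun := fun q => (q.1 - h q.2, q.2)
      left_inv := fun q => by simp
      right_inv := fun q => by simp }
  have hcomp : (fun p : α × β => (f p.1 + h p.2, p.2)) = shear ∘ Prod.map f id := rfl
  rw [hcomp, shear.comp_bijective, Prod.map_bijective, and_iff_left Function.bijective_id]

/-- A T-quasigroup `A(x,y) = φ x + ψ y + c` over an abelian group is
orthogonal to its (132)-parastrophe `ψ⁻¹ x - ψ⁻¹ (φ y) - ψ⁻¹ c` iff
`x ↦ φ (φ x) + ψ x` is a bijection. -/
theorem Tquasigroup_orth_132 {Q : Type*} [AddCommGroup Q]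
    (φ ψ : Q ≃+ Q) (c : Q) :
    Function.Bijective
        (fun p : Q × Q =>
          (φ p.1 + ψ p.2 + c, ψ.symm p.1 - ψ.symm (φ p.2) - ψ.symm c)) ↔
      Function.Bijective (fun x : Q => φ (φ x) + ψ x) := by
  let τ : Q × Q ≃ Q × Q :=
    { toFun := fun p => (p.2, ψ.symm (p.1 - φ p.2 - c))
      invFun := fun q => (ψ q.2 + φ q.1 + c, q.1)
      left_inv := fun p => by ext <;> simp; abel
      right_inv := fun q => by ext <;> simp; abel }
  have hshear : (fun p : Q × Q =>
        (φ p.1 + ψ p.2 + c, ψ.symm p.1 - ψ.symm (φ p.2) - ψ.symm c)) =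
      (fun q : Q × Q => (φ (φ q.1) + ψ q.1 + (φ (ψ q.2) + φ c + c), q.2)) ∘ τ := by
    funext p
    ext
    · simp only [map_sub, Equiv.coe_fn_mk, Function.comp_apply, AddEquiv.apply_symm_apply,
        sub_add_cancel, τ]
      abel
    · simp [τ]
  rw [hshear, τ.bijective_comp]
  exact Function.bijective_prod_shear_iff (fun y => φ (φ y) + ψ y) fun u => φ (ψ u) + φ c + c
end

section
/- Let p be a prime, let k, m, c ∈ ZMod p, and suppose that k, m, k+m, k−m, k+1, m+1, k²+m, and k+m² are all nonzero in ZMod p. Define A(x,y) = k·x + m·y + c on ZMod p. Then A is orthogonal to each of its five parastrophes, namely to ^{(12)}A(x,y) = m·x + k·y + c, to ^{(13)}A(x,y) = k⁻¹·x − k⁻¹·m·y − k⁻¹·c, to ^{(23)}A(x,y) = −m⁻¹·k·x + m⁻¹·y − m⁻¹·c, to ^{(123)}A(x,y) = −k⁻¹·m·x + k⁻¹·y − k⁻¹·c, and to ^{(132)}A(x,y) = m⁻¹·x − m⁻¹·k·y − m⁻¹·c. -/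
/-! Each of the five maps is an affine self-map of `(ZMod p)²`, hence bijective as soon as its
linear part has nonzero determinant. Up to the units `k` and `m`, the five determinants are
`(k - m)(k + m)`, `m(k + 1)`, `k(m + 1)`, `k + m²` and `k² + m`. -/

open Function

theorem bijective_of_eq_affine {F : Type*} [Field F] {a b e a' b' e' : F}
    (hdet : a * b' - b * a' ≠ 0) {f : F × F → F × F}
    (hf : ∀ q, f q = (a * q.1 + b * q.2 + e, a' * q.1 + b' * q.2 + e')) :
    Bijective f := by
  set d := a * b' - b * a'
  let g : F × F → F × F := fun v =>
    ((b' * (v.1 - e) - b * (v.2 - e')) / d, (a * (v.2 - e') - a' * (v.1 - e)) / d)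
  refine bijective_iff_has_inverse.2 ⟨g, fun q => ?_, fun v => ?_⟩
  · simp only [g, hf]
    ext <;> field_simp <;> ring
  · simp only [g, hf]
    ext <;> field_simp <;> ring

/-- Over `ZMod p` (`p` prime), the T-quasigroup
`A(x,y) = k·x + m·y + c` with `k, m, k+m, k-m, k+1, m+1, k²+m, k+m² ≠ 0`
is orthogonal to every one of its five parastrophes. -/
theorem Tquasigroup_orth_all_parastrophes (p : ℕ) [Fact p.Prime]
    (k m c : ZMod p)
    (hk : k ≠ 0) (hm : m ≠ 0) (hkm : k + m ≠ 0) (hkm' : k - m ≠ 0)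
    (hk1 : k + 1 ≠ 0) (hm1 : m + 1 ≠ 0)
    (hk2m : k ^ 2 + m ≠ 0) (hkm2 : k + m ^ 2 ≠ 0) :
    Function.Bijective (fun q : ZMod p × ZMod p =>
        (k * q.1 + m * q.2 + c, m * q.1 + k * q.2 + c)) ∧
    Function.Bijective (fun q : ZMod p × ZMod p =>
        (k * q.1 + m * q.2 + c, k⁻¹ * q.1 - k⁻¹ * m * q.2 - k⁻¹ * c)) ∧
    Function.Bijective (fun q : ZMod p × ZMod p =>
        (k * q.1 + m * q.2 + c, -(m⁻¹ * k) * q.1 + m⁻¹ * q.2 - m⁻¹ * c)) ∧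
    Function.Bijective (fun q : ZMod p × ZMod p =>
        (k * q.1 + m * q.2 + c, -(k⁻¹ * m) * q.1 + k⁻¹ * q.2 - k⁻¹ * c)) ∧
    Function.Bijective (fun q : ZMod p × ZMod p =>
        (k * q.1 + m * q.2 + c, m⁻¹ * q.1 - m⁻¹ * k * q.2 - m⁻¹ * c)) := by
  have det12 : k * k - m * m ≠ 0 := by
    rw [show k * k - m * m = (k - m) * (k + m) by ring]; exact mul_ne_zero hkm' hkm
  have det13 : k * -(k⁻¹ * m) - m * k⁻¹ ≠ 0 := by
    rw [show k * -(k⁻¹ * m) - m * k⁻¹ = -(m * (k + 1) / k) by field_simp; ring]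
    exact neg_ne_zero.2 (div_ne_zero (mul_ne_zero hm hk1) hk)
  have det23 : k * m⁻¹ - m * -(m⁻¹ * k) ≠ 0 := by
    rw [show k * m⁻¹ - m * -(m⁻¹ * k) = k * (m + 1) / m by field_simp; ring]
    exact div_ne_zero (mul_ne_zero hk hm1) hm
  have det123 : k * k⁻¹ - m * -(k⁻¹ * m) ≠ 0 := by
    rw [show k * k⁻¹ - m * -(k⁻¹ * m) = (k + m ^ 2) / k by field_simp; ring]
    exact div_ne_zero hkm2 hk
  have det132 : k * -(m⁻¹ * k) - m * m⁻¹ ≠ 0 := by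
    rw [show k * -(m⁻¹ * k) - m * m⁻¹ = -((k ^ 2 + m) / m) by field_simp; ring]
    exact neg_ne_zero.2 (div_ne_zero hk2m hm)
  exact ⟨bijective_of_eq_affine det12 fun _ => rfl,
    bijective_of_eq_affine (e' := -(k⁻¹ * c)) det13 fun _ => Prod.ext rfl (by ring),
    bijective_of_eq_affine (e' := -(m⁻¹ * c)) det23 fun _ => Prod.ext rfl (by ring),
    bijective_of_eq_affine (e' := -(k⁻¹ * c)) det123 fun _ => Prod.ext rfl (by ring),
    bijective_of_eq_affine (e' := -(m⁻¹ * c)) det132 fun _ => Prod.ext rfl (by ring)⟩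
end

section
/- (Toyoda's theorem) Let Q be a nonempty type with a binary operation · such that for every a ∈ Q the left translation x ↦ a·x and the right translation x ↦ x·a are bijections of Q, and suppose the medial identity (x·y)·(u·v) = (x·u)·(y·v) holds for all x, y, u, v ∈ Q. Then there exist an abelian group structure (Q,+) on Q, additive automorphisms φ and ψ of (Q,+) with φ ∘ ψ = ψ ∘ φ, and an element c ∈ Q such that x·y = φ(x) + ψ(y) + c for all x, y ∈ Q. -/
/-!
Fix `e` and put `R x = x·e`, `L y = e·y`. The principal isotope `x + y = R⁻¹ x · L⁻¹ y` has
the unit `e·e` and inherits mediality from `·`, so the Eckmann–Hilton argument makes it an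
abelian group, in which `x·y = R x + L y`. Feeding this form back into the medial law shows
that `R` and `L` are affine, `R = φ + R 0` and `L = ψ + L 0`, and comparing both sides of the
medial law once more gives `φ ∘ ψ = ψ ∘ φ`.
-/

open Function

def IsMedial {α : Type*} (mul : α → α → α) : Prop :=
  ∀ x y u v, mul (mul x y) (mul u v) = mul (mul x u) (mul y v)

theorem IsMedial.flip {α : Type*} {mul : α → α → α} (hmed : IsMedial mul) :
    IsMedial (flip mul) :=
  fun x y u v => hmed v u y x

structure IsMedialQuasigroup {Q : Type*} (mul : Q → Q → Q) : Prop where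
  bijective_left : ∀ a, Bijective (mul a)
  bijective_right : ∀ a, Bijective (mul · a)
  medial : IsMedial mul

section AddCommGroup

variable {G : Type*} [AddCommGroup G] {mul : G → G → G}

theorem IsMedial.exists_addEquiv_of_mul_eq_add_left (hmed : IsMedial mul) (R L : G ≃ G)
    (hmul : ∀ x y, mul x y = R x + L y) : ∃ φ : G ≃+ G, ∀ x, R x = φ x + R 0 := by
  have hdiff : ∀ a b, R (a + b) - R a = L (R (L.symm b)) - L (R (L.symm 0)) := fun a b => by
    have h := hmed (R.symm a) (L.symm b) (L.symm 0) (L.symm 0)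
    simp only [hmul, Equiv.apply_symm_apply, add_zero] at h
    rw [sub_eq_sub_iff_add_eq_add, h, add_comm]
  have hadd : ∀ a b, R (a + b) = R a + (R b - R 0) := fun a b => by
    have h := (hdiff a b).trans (hdiff 0 b).symm
    rw [zero_add] at h
    rw [← h]; abel
  refine ⟨AddEquiv.mk' (R.trans (Equiv.subRight (R 0))) fun a b => ?_, fun x => ?_⟩
  · show R (a + b) - R 0 = (R a - R 0) + (R b - R 0)
    rw [hadd]; abel
  · exact (sub_add_cancel _ _).symm

theorem IsMedial.comp_comm_of_mul_eq_add (hmed : IsMedial mul) (φ ψ : G →+ G) (c : G)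
    (hmul : ∀ x y, mul x y = φ x + ψ y + c) : ⇑φ ∘ ⇑ψ = ⇑ψ ∘ ⇑φ := by
  funext y
  have h := hmed 0 y 0 0
  simp only [hmul, map_add, map_zero, zero_add, add_zero] at h
  calc φ (ψ y) = φ (ψ y) + φ c + ψ c + c - (φ c + ψ c + c) := by abel
    _ = ψ (φ y) := by rw [h]; abel

theorem IsMedial.exists_addEquiv_of_mul_eq_add (hmed : IsMedial mul) (R L : G ≃ G)
    (hmul : ∀ x y, mul x y = R x + L y) :
    ∃ (φ ψ : G ≃+ G) (c : G), ⇑φ ∘ ⇑ψ = ⇑ψ ∘ ⇑φ ∧ ∀ x y, mul x y = φ x + ψ y + c := by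
  obtain ⟨φ, hφ⟩ := hmed.exists_addEquiv_of_mul_eq_add_left R L hmul
  obtain ⟨ψ, hψ⟩ := hmed.flip.exists_addEquiv_of_mul_eq_add_left L R
    fun x y => (hmul y x).trans (add_comm _ _)
  have hmul' : ∀ x y, mul x y = φ x + ψ y + (R 0 + L 0) := fun x y => by
    rw [hmul, hφ, hψ]; abel
  exact ⟨φ, ψ, _, hmed.comp_comm_of_mul_eq_add φ.toAddMonoidHom ψ.toAddMonoidHom _ hmul', hmul'⟩

end AddCommGroup

namespace IsMedialQuasigroup

variable {Q : Type*} {mul : Q → Q → Q} (h : IsMedialQuasigroup mul)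

noncomputable def leftEquiv (a : Q) : Q ≃ Q := Equiv.ofBijective _ (h.bijective_left a)

noncomputable def rightEquiv (a : Q) : Q ≃ Q := Equiv.ofBijective _ (h.bijective_right a)

noncomputable def isotope (e x y : Q) : Q :=
  mul ((h.rightEquiv e).symm x) ((h.leftEquiv e).symm y)

theorem isotope_mul_mul (e x y : Q) : h.isotope e (mul x e) (mul e y) = mul x y :=
  congrArg₂ mul ((h.rightEquiv e).symm_apply_apply x) ((h.leftEquiv e).symm_apply_apply y)

theorem isUnital_isotope (e : Q) : EckmannHilton.IsUnital (h.isotope e) (mul e e) where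
  left_id y := by
    obtain ⟨y, rfl⟩ := (h.bijective_left e).surjective y
    exact h.isotope_mul_mul e e y
  right_id x := by
    obtain ⟨x, rfl⟩ := (h.bijective_right e).surjective x
    exact h.isotope_mul_mul e x e

theorem isMedial_isotope (e : Q) : IsMedial (h.isotope e) := by
  obtain ⟨r, her⟩ := (h.bijective_left e).surjective e
  obtain ⟨s, hse⟩ : ∃ s, mul s e = e := (h.bijective_right e).surjective e
  have hR : ∀ x y, mul (mul x y) e = mul (mul x e) (mul y r) := fun x y => by
    simpa only [her] using h.medial x y e r
  have hL : ∀ x y, mul e (mul x y) = mul (mul s x) (mul e y) := fun x y => by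
    simpa only [hse] using h.medial s e x y
  have hRL : ∀ z, mul (mul s z) e = mul e (mul z r) := fun z => by
    simpa only [her, hse] using h.medial s z e r
  have bijR := h.bijective_right
  have bijL := h.bijective_left
  intro a b c d
  -- Parametrise `b` as `L (R_r b) = R (L_s b)` and `c` as `R (L_s c) = L (R_r c)`, so that
  -- `hR` and `hL` collapse both sides to products of products.
  obtain ⟨a, rfl⟩ := ((bijR e).comp (bijR e)).surjective a
  obtain ⟨b, rfl⟩ := ((bijL e).comp (bijR r)).surjective b
  obtain ⟨c, rfl⟩ := ((bijR e).comp (bijL s)).surjective c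
  obtain ⟨d, rfl⟩ := ((bijL e).comp (bijL e)).surjective d
  simp only [comp_apply]
  calc h.isotope e (h.isotope e (mul (mul a e) e) (mul e (mul b r)))
        (h.isotope e (mul (mul s c) e) (mul e (mul e d)))
      = mul (mul a b) (mul c d) := by
        rw [h.isotope_mul_mul, h.isotope_mul_mul, ← hR, ← hL, h.isotope_mul_mul]
    _ = mul (mul a c) (mul b d) := h.medial a b c d
    _ = h.isotope e (h.isotope e (mul (mul a e) e) (mul (mul s c) e))
        (h.isotope e (mul e (mul b r)) (mul e (mul e d))) := by
        rw [hRL c, ← hRL b, h.isotope_mul_mul, h.isotope_mul_mul, ← hR, ← hL, h.isotope_mul_mul]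

theorem isotope_left_surjective (e a : Q) : Surjective (h.isotope e a) :=
  (h.bijective_left _).surjective.comp (h.leftEquiv e).symm.surjective

noncomputable abbrev addCommMonoid (e : Q) : AddCommMonoid Q :=
  letI : AddZeroClass Q :=
    { add := h.isotope e
      zero := mul e e
      zero_add := (h.isUnital_isotope e).left_id
      add_zero := (h.isUnital_isotope e).right_id }
  EckmannHilton.addCommMonoid (h.isUnital_isotope e) (h.isMedial_isotope e)

noncomputable abbrev addCommGroup (e : Q) : AddCommGroup Q :=
  letI := h.addCommMonoid e
  letI : Neg Q := ⟨fun a => surjInv (h.isotope_left_surjective e a) (mul e e)⟩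
  { zsmul := zsmulRec
    neg_add_cancel a := (add_comm _ _).trans (surjInv_eq _ _) }

end IsMedialQuasigroup

/-- Toyoda's theorem: every medial quasigroup `(Q, ·)` has the form
`x·y = φ x + ψ y + c` for some abelian group structure `(Q,+)`, commuting
automorphisms `φ, ψ` of it, and a fixed element `c`. -/
theorem toyoda {Q : Type*} [Nonempty Q] (mul : Q → Q → Q)
    (hL : ∀ a : Q, Function.Bijective (fun x => mul a x))
    (hR : ∀ a : Q, Function.Bijective (fun x => mul x a))
    (hmedial : ∀ x y u v : Q,
      mul (mul x y) (mul u v) = mul (mul x u) (mul y v)) :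
    ∃ inst : AddCommGroup Q,
      letI := inst
      ∃ (φ ψ : Q ≃+ Q) (c : Q),
        (⇑φ ∘ ⇑ψ = ⇑ψ ∘ ⇑φ) ∧ ∀ x y : Q, mul x y = φ x + ψ y + c := by
  obtain ⟨e⟩ := ‹Nonempty Q›
  have h : IsMedialQuasigroup mul := ⟨hL, hR, hmedial⟩
  let := h.addCommGroup e
  exact ⟨_, IsMedial.exists_addEquiv_of_mul_eq_add hmedial (h.rightEquiv e) (h.leftEquiv e)
    fun x y => (h.isotope_mul_mul e x y).symm⟩
end
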